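/- arXiv:2403.06334 — 2 statements merged into one kernel-verified Lean document; each statement's English description precedes it below -/
import Mathlib

section
/- There is a p-morphism from the bitopological product 𝔛 × 𝒴 onto Top₂(𝕋_{2,2+2}): the map f defined by f(⟨α,0⟩, β) = ⟨g(α,β), root⟩ and, for n ≥ 1, f(⟨α,n⟩, β) = ⟨g(α↾_n·0^ω, β↾_n·0^ω), f_ω(γ)⟩ where β = β↾_n · γ, is surjective, open and continuous from the horizontal topology of 𝔛 × 𝒴 to the Alexandrov topology T_{R₁′}, and open and continuous from the vertical topology of 𝔛 × 𝒴 to the Alexandrov topology T_{R₂′}. -/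
/- ============== Formulas ============== -/

/-- Unimodal formulas. -/
inductive MForm : Type
  | var : ℕ → MForm
  | bot : MForm
  | imp : MForm → MForm → MForm
  | box : MForm → MForm

namespace MForm
def neg (A : MForm) : MForm := A.imp .bot
def dia (A : MForm) : MForm := (MForm.box A.neg).neg
def subst (σ : ℕ → MForm) : MForm → MForm
  | var n => σ n
  | bot => bot
  | imp A B => (subst σ A).imp (subst σ B)
  | box A => MForm.box (subst σ A)
end MForm

/-- Bimodal formulas (`box 0` is □₁ and `box 1` is □₂). -/
inductive BForm : Type
  | var : ℕ → BForm
  | bot : BForm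
  | imp : BForm → BForm → BForm
  | box : Fin 2 → BForm → BForm

namespace BForm
def neg (A : BForm) : BForm := A.imp .bot
def dia (i : Fin 2) (A : BForm) : BForm := (BForm.box i A.neg).neg
def subst (σ : ℕ → BForm) : BForm → BForm
  | var n => σ n
  | bot => bot
  | imp A B => (subst σ A).imp (subst σ B)
  | box i A => BForm.box i (subst σ A)
end BForm

/-- Translation of a unimodal formula into the bimodal language,
reading □ as □ᵢ. -/
def MForm.toB (i : Fin 2) : MForm → BForm
  | .var n => .var n
  | .bot => .bot
  | .imp A B => (MForm.toB i A).imp (MForm.toB i B)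
  | .box A => BForm.box i (MForm.toB i A)

/- ============== Normal modal logics ============== -/

/-- Provability in the smallest normal unimodal logic containing the axioms `Ax`:
classical tautologies (via a Hilbert axiomatization), the normality axiom,
modus ponens, necessitation and uniform substitution. -/
inductive MProv (Ax : Set MForm) : MForm → Prop
  | axm {A : MForm} : A ∈ Ax → MProv Ax A
  | pl1 {A B : MForm} : MProv Ax (A.imp (B.imp A))
  | pl2 {A B C : MForm} : MProv Ax ((A.imp (B.imp C)).imp ((A.imp B).imp (A.imp C)))
  | pl3 {A : MForm} : MProv Ax ((A.neg.neg).imp A)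
  | kax {A B : MForm} : MProv Ax ((MForm.box (A.imp B)).imp ((MForm.box A).imp (MForm.box B)))
  | mp {A B : MForm} : MProv Ax (A.imp B) → MProv Ax A → MProv Ax B
  | nec {A : MForm} : MProv Ax A → MProv Ax (MForm.box A)
  | subst {A : MForm} (σ : ℕ → MForm) : MProv Ax A → MProv Ax (A.subst σ)

/-- Provability in the smallest normal bimodal logic containing the axioms `Ax`. -/
inductive BProv (Ax : Set BForm) : BForm → Prop
  | axm {A : BForm} : A ∈ Ax → BProv Ax A
  | pl1 {A B : BForm} : BProv Ax (A.imp (B.imp A))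
  | pl2 {A B C : BForm} : BProv Ax ((A.imp (B.imp C)).imp ((A.imp B).imp (A.imp C)))
  | pl3 {A : BForm} : BProv Ax ((A.neg.neg).imp A)
  | kax (i : Fin 2) {A B : BForm} :
      BProv Ax ((BForm.box i (A.imp B)).imp ((BForm.box i A).imp (BForm.box i B)))
  | mp {A B : BForm} : BProv Ax (A.imp B) → BProv Ax A → BProv Ax B
  | nec (i : Fin 2) {A : BForm} : BProv Ax A → BProv Ax (BForm.box i A)
  | subst {A : BForm} (σ : ℕ → BForm) : BProv Ax A → BProv Ax (A.subst σ)

/-- The propositional letter p. -/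
def pM : MForm := .var 0

/-- Axioms of S4 : □p→p and □p→□□p. -/
def S4Ax : Set MForm := {(MForm.box pM).imp pM, (MForm.box pM).imp (MForm.box (MForm.box pM))}

/-- The McKinsey axiom □◇p→◇□p. -/
def McKM : MForm := (MForm.box pM.dia).imp (MForm.box pM).dia

/-- The logic S4. -/
def S4L : Set MForm := {A | MProv S4Ax A}

/-- The logic S4.1 = S4 + McKinsey. -/
def S41L : Set MForm := {A | MProv (S4Ax ∪ {McKM}) A}

/-- Axioms of the fusion S4.1 ∗ S4 : all theorems of S4.1 read with □₁ together
with all theorems of S4 read with □₂. -/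
def FusionAx : Set BForm := (MForm.toB 0 '' S41L) ∪ (MForm.toB 1 '' S4L)

/-- The fusion S4.1 ∗ S4 (as a normal bimodal logic). -/
def FusionL : Set BForm := {A | BProv FusionAx A}

def pB : BForm := .var 0

/-- The formula ◇₁□₂(◇₁p → □₁p). -/
def MKB : BForm := BForm.dia 0 (BForm.box 1 ((BForm.dia 0 pB).imp (BForm.box 0 pB)))

/-- The logic L = S4.1 ∗ S4 + ◇₁□₂(◇₁p → □₁p). -/
def LL : Set BForm := {A | BProv (FusionAx ∪ {MKB}) A}

/- ============== Kripke semantics ============== -/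

/-- Truth of a bimodal formula at a point of a Kripke 2-frame `(W, R 0, R 1)`
under valuation `V`. -/
def BSat {W : Type} (R : Fin 2 → W → W → Prop) (V : ℕ → W → Prop) : W → BForm → Prop
  | x, .var n => V n x
  | _, .bot => False
  | x, .imp A B => BSat R V x A → BSat R V x B
  | x, .box i A => ∀ y, R i x y → BSat R V y A

/-- Frame validity for bimodal formulas. -/
def BValid {W : Type} (R : Fin 2 → W → W → Prop) (A : BForm) : Prop :=
  ∀ (V : ℕ → W → Prop) (x : W), BSat R V x A

/-- Truth of a unimodal formula at a point of a Kripke frame. -/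
def MKSat {W : Type} (R : W → W → Prop) (V : ℕ → W → Prop) : W → MForm → Prop
  | x, .var n => V n x
  | _, .bot => False
  | x, .imp A B => MKSat R V x A → MKSat R V x B
  | x, .box A => ∀ y, R x y → MKSat R V y A

/-- Frame validity for unimodal formulas. -/
def MKValid {W : Type} (R : W → W → Prop) (A : MForm) : Prop :=
  ∀ (V : ℕ → W → Prop) (x : W), MKSat R V x A

/- ============== Topological semantics ============== -/

/-- Topological truth of a unimodal formula: □A holds at `x` iff some open
neighbourhood of `x` satisfies `A` everywhere. -/
def MTSat {X : Type} (t : TopologicalSpace X) (V : ℕ → X → Prop) : X → MForm → Prop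
  | x, .var n => V n x
  | _, .bot => False
  | x, .imp A B => MTSat t V x A → MTSat t V x B
  | x, .box A => ∃ U : Set X, t.IsOpen U ∧ x ∈ U ∧ ∀ y ∈ U, MTSat t V y A

/-- Topological validity for unimodal formulas. -/
def MTValid {X : Type} (t : TopologicalSpace X) (A : MForm) : Prop :=
  ∀ (V : ℕ → X → Prop) (x : X), MTSat t V x A

/-- Bitopological truth of a bimodal formula: □ᵢ is interpreted via the
topology `t i`. -/
def BTSat {X : Type} (t : Fin 2 → TopologicalSpace X) (V : ℕ → X → Prop) : X → BForm → Prop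
  | x, .var n => V n x
  | _, .bot => False
  | x, .imp A B => BTSat t V x A → BTSat t V x B
  | x, .box i A => ∃ U : Set X, (t i).IsOpen U ∧ x ∈ U ∧ ∀ y ∈ U, BTSat t V y A

/-- Bitopological validity for bimodal formulas. -/
def BTValid {X : Type} (t : Fin 2 → TopologicalSpace X) (A : BForm) : Prop :=
  ∀ (V : ℕ → X → Prop) (x : X), BTSat t V x A

/-- The horizontal topology on `X × Y`: generated by the base
`{U × {y} : U open in X, y ∈ Y}`. -/
def horiz {X Y : Type} (t : TopologicalSpace X) : TopologicalSpace (X × Y) :=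
  TopologicalSpace.generateFrom
    {S | ∃ (U : Set X) (y : Y), t.IsOpen U ∧ S = U ×ˢ ({y} : Set Y)}

/-- The vertical topology on `X × Y`: generated by the base
`{{x} × U : x ∈ X, U open in Y}`. -/
def vert {X Y : Type} (t : TopologicalSpace Y) : TopologicalSpace (X × Y) :=
  TopologicalSpace.generateFrom
    {S | ∃ (x : X) (U : Set Y), t.IsOpen U ∧ S = ({x} : Set X) ×ˢ U}

/-- The topological product `L₁ ×ₜ L₂` of two unimodal logics: the set of all
bimodal formulas valid in every bitopological product `𝔛₁ × 𝔛₂` of (nonempty)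
topological spaces with `𝔛₁ ⊨ L₁` and `𝔛₂ ⊨ L₂`. -/
def TopProdLogic (L1 L2 : Set MForm) : Set BForm :=
  {A | ∀ (X Y : Type) (t1 : TopologicalSpace X) (t2 : TopologicalSpace Y),
      Nonempty X → Nonempty Y →
      (∀ B ∈ L1, MTValid t1 B) → (∀ B ∈ L2, MTValid t2 B) →
      BTValid ![horiz t1, vert t2] A}

/-- The Alexandrov topology of a (reflexive transitive) relation `R`:
the topology with base `{R(x) : x ∈ W}`. -/
def alexandrov {W : Type} (R : W → W → Prop) : TopologicalSpace W :=
  TopologicalSpace.generateFrom {S | ∃ x, S = {t | R x t}}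

/-- A space is weakly scattered if every nonempty open set contains an
isolated point. -/
def WeaklyScattered {X : Type} (t : TopologicalSpace X) : Prop :=
  ∀ U : Set X, t.IsOpen U → U.Nonempty → ∃ x ∈ U, t.IsOpen ({x} : Set X)

/-- p-morphism between Kripke 1-frames. -/
def IsPMorphism {W U : Type} (R : W → W → Prop) (S : U → U → Prop) (f : W → U) : Prop :=
  Function.Surjective f ∧ (∀ x y, R x y → S (f x) (f y)) ∧
    (∀ x u, S (f x) u → ∃ y, R x y ∧ f y = u)

/-- p-morphism between Kripke 2-frames. -/
def IsPMorphism2 {W U : Type} (R1 R2 : W → W → Prop) (S1 S2 : U → U → Prop)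
    (f : W → U) : Prop :=
  Function.Surjective f ∧
    (∀ x y, R1 x y → S1 (f x) (f y)) ∧ (∀ x u, S1 (f x) u → ∃ y, R1 x y ∧ f y = u) ∧
    (∀ x y, R2 x y → S2 (f x) (f y)) ∧ (∀ x u, S2 (f x) u → ∃ y, R2 x y ∧ f y = u)

/- ============== The frames 𝕋₂,₂ and 𝕋₂,₂₊₂ ============== -/

/-- The four-letter alphabet {a₁,a₂,b₁,b₂}: `(false, i)` is the a-letter `aᵢ₊₁`
and `(true, i)` is the b-letter `bᵢ₊₁`. -/
abbrev Letter : Type := Bool × Fin 2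

/-- `T₂,₂ = {a₁,a₂,b₁,b₂}*`. -/
abbrev T22 : Type := List Letter

/-- `T₂ = {1,2}*`. -/
abbrev T2W : Type := List (Fin 2)

/-- First relation of `𝕋₂,₂`: append a word over the a-letters. -/
def R1T (w w' : T22) : Prop := ∃ c : T22, (∀ l ∈ c, l.1 = false) ∧ w' = w ++ c

/-- Second relation of `𝕋₂,₂`: append a word over the b-letters. -/
def R2T (w w' : T22) : Prop := ∃ d : T22, (∀ l ∈ d, l.1 = true) ∧ w' = w ++ d

/-- The carrier of `𝕋₂,₂₊₂` : `⟨a, root⟩` is encoded as `(a, none)` and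
`⟨a, b⟩` with `b ∈ T₂` as `(a, some b)`. -/
abbrev W222 : Type := T22 × Option T2W

/-- Generators of `R₁′`. -/
def R1'gen : W222 → W222 → Prop := fun x y =>
  (∃ a a', R1T a a' ∧ x = (a, none) ∧ y = (a', none)) ∨
  (∃ a, x = (a, none) ∧ y = (a, some ([] : T2W)))

/-- `R₁′`: smallest reflexive transitive relation containing the generators. -/
def R1' : W222 → W222 → Prop := Relation.ReflTransGen R1'gen

/-- Generators of `R₂′`. -/
def R2'gen : W222 → W222 → Prop := fun x y =>
  (∃ a a', R2T a a' ∧ x = (a, none) ∧ y = (a', none)) ∨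
  (∃ a b b', b <+: b' ∧ x = (a, some b) ∧ y = (a, some b'))

/-- `R₂′`: smallest reflexive transitive relation containing the generators. -/
def R2' : W222 → W222 → Prop := Relation.ReflTransGen R2'gen

/- ============== Pseudo-infinite paths and the spaces 𝒴 and 𝔛 ============== -/

/-- Infinite sequences over {0,1,2}: `none` encodes 0 and `some i` encodes
`i+1 ∈ {1,2}`. -/
abbrev Seq3 : Type := ℕ → Option (Fin 2)

/-- `W_ω`: pseudo-infinite paths, i.e. sequences with finitely many nonzero
entries. -/
def Wom : Type := {s : Seq3 // {k | s k ≠ none}.Finite}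

/-- `st(s)`: the least `N` such that all entries from `N` on are zero. -/
noncomputable def stN {γ : Type} (s : ℕ → Option γ) : ℕ :=
  sInf {N | ∀ k, N ≤ k → s k = none}

/-- The first `k` entries of a sequence, as a finite word. -/
def takeSeq {γ : Type} (s : ℕ → Option γ) (k : ℕ) : List (Option γ) :=
  List.ofFn (fun i : Fin k => s i.1)

/-- `f_F`: delete all zeros from a finite word. -/
def fF {γ : Type} (l : List (Option γ)) : List γ := l.filterMap id

/-- `f_ω`: delete the zeros from a pseudo-infinite path, producing a finite word. -/
noncomputable def squash {γ : Type} (s : ℕ → Option γ) : List γ := fF (takeSeq s (stN s))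

/-- The basic set `U_k(α) = {β ∈ W_ω : α↾k = β↾k and f_F(α↾k) ⊑ f_ω(β)}`. -/
def Uset (α : Wom) (k : ℕ) : Set Wom :=
  {β | takeSeq β.1 k = takeSeq α.1 k ∧ fF (takeSeq α.1 k) <+: squash β.1}

/-- The topology `T_ω` on `W_ω` generated by the base `{U_k(α) : k > 0}`;
`𝒴 = (W_ω, T_ω)`. -/
def Tom : TopologicalSpace Wom :=
  TopologicalSpace.generateFrom {S | ∃ α k, 0 < k ∧ S = Uset α k}

/-- The basic sets of the space `𝔛`:
`U′_k(α,0) = (U_k(α) × {0}) ∪ (U_k(α) × {n ≥ k})` and `U′_k(α,n) = {⟨α,n⟩}`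
for `n ≥ 1`. -/
def U'set (α : Wom) (k n : ℕ) : Set (Wom × ℕ) :=
  if n = 0 then (Uset α k ×ˢ ({0} : Set ℕ)) ∪ (Uset α k ×ˢ {m : ℕ | k ≤ m})
  else {(α, n)}

/-- The topology of the space `𝔛 = (W_ω × ℕ, T)`. -/
def TX : TopologicalSpace (Wom × ℕ) :=
  TopologicalSpace.generateFrom {S | ∃ α k n, S = U'set α k n}

/-- Interleaving of two paths: the sequence `a_{x₁} b_{y₁} a_{x₂} b_{y₂} …`
(with `a₀ = b₀ = 0`). -/
def interleave (α β : Seq3) : ℕ → Option Letter := fun n =>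
  if n % 2 = 0 then (α (n / 2)).map (fun v => ((false, v) : Letter))
  else (β (n / 2)).map (fun v => ((true, v) : Letter))

/-- The map `g : W_ω × W_ω → T₂,₂` obtained by interleaving and deleting zeros. -/
noncomputable def gmap (α β : Seq3) : T22 := squash (interleave α β)

/-- `g` as a map on pairs. -/
noncomputable def gPair : Wom × Wom → T22 := fun q => gmap q.1.1 q.2.1

/-- `s↾n · 0^ω`. -/
def truncSeq (s : Seq3) (n : ℕ) : Seq3 := fun k => if k < n then s k else none

/-- The tail `γ` of `s = s↾n · γ`. -/
def shiftSeq (s : Seq3) (n : ℕ) : Seq3 := fun k => s (n + k)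

/-- The map `f : 𝔛 × 𝒴 → 𝕋₂,₂₊₂` :
`f(⟨α,0⟩,β) = ⟨g(α,β), root⟩` and for `n ≥ 1`,
`f(⟨α,n⟩,β) = ⟨g(α↾n·0^ω, β↾n·0^ω), f_ω(γ)⟩` where `β = β↾n·γ`. -/
noncomputable def fXY : (Wom × ℕ) × Wom → W222 := fun q =>
  if q.1.2 = 0 then (gmap q.1.1.1 q.2.1, none)
  else (gmap (truncSeq q.1.1.1 q.1.2) (truncSeq q.2.1 q.1.2),
        some (squash (shiftSeq q.2.1 q.1.2)))

/-- An effective encoding of bimodal formulas by natural numbers. -/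
def encodeB : BForm → ℕ
  | .var n => Nat.pair 0 n
  | .bot => Nat.pair 1 0
  | .imp A B => Nat.pair 2 (Nat.pair (encodeB A) (encodeB B))
  | .box i A => Nat.pair 3 (Nat.pair i.1 (encodeB A))

/-!
Every basic neighbourhood of a point of `𝔛 × 𝒴` (horizontal or vertical) consists of the
points obtained by keeping a long prefix of `α` (resp. `β`) and appending an arbitrary
pseudo-infinite tail `γ`. Once the prefix reaches past the supports of `α` and `β`, the value of
`f` at such a point is the value at the centre extended by the a-word `g(γ, 0^ω)`, by the b-word
`g(0^ω, γ)` or by the word `f_ω(γ)` over `{1,2}`, and every such word arises from some `γ`.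
Points `⟨α, n⟩` with `n ≥ 1` are isolated in `𝔛`, and `R₁′` is trivial above `⟨w, b⟩`.
These are the forth and back conditions for `R₁′` horizontally and `R₂′` vertically, i.e.
continuity and openness into the Alexandrov topologies. Surjectivity follows from the back
conditions, since every point of `𝕋₂,₂₊₂` is reachable from `⟨ε, root⟩` by `R₁′`- and `R₂′`-steps.
-/

open Filter Topology TopologicalSpace

section Sequences

variable {γ : Type}

def VanishesFrom (s : ℕ → Option γ) (N : ℕ) : Prop := ∀ k, N ≤ k → s k = none

lemma VanishesFrom.mono {s : ℕ → Option γ} {N M : ℕ} (h : VanishesFrom s N) (hNM : N ≤ M) :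
    VanishesFrom s M :=
  fun k hk => h k (hNM.trans hk)

lemma VanishesFrom.finite {s : ℕ → Option γ} {N : ℕ} (h : VanishesFrom s N) :
    {k | s k ≠ none}.Finite :=
  (Set.finite_Iio N).subset fun k hk => not_le.1 fun hNk => hk (h k hNk)

lemma eventually_vanishesFrom {s : ℕ → Option γ} (h : {k | s k ≠ none}.Finite) :
    ∀ᶠ N in atTop, VanishesFrom s N := by
  obtain ⟨N, hN⟩ := h.bddAbove
  filter_upwards [eventually_gt_atTop N] with M hM k hk
  by_contra hne
  exact (hN hne).not_gt (hM.trans_le hk)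

lemma takeSeq_add (s : ℕ → Option γ) (m n : ℕ) :
    takeSeq s (m + n) = takeSeq s m ++ takeSeq (fun k => s (m + k)) n := by
  simp [takeSeq, List.ofFn_add]

lemma takeSeq_eq_takeSeq_iff {s t : ℕ → Option γ} {n : ℕ} :
    takeSeq s n = takeSeq t n ↔ ∀ k < n, s k = t k := by
  simp [takeSeq, List.ofFn_inj, funext_iff, Fin.forall_iff]

lemma fF_append (l₁ l₂ : List (Option γ)) : fF (l₁ ++ l₂) = fF l₁ ++ fF l₂ :=
  List.filterMap_append

lemma fF_takeSeq_eq_nil {s : ℕ → Option γ} {n : ℕ} (h : ∀ k < n, s k = none) :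
    fF (takeSeq s n) = [] := by
  simp [fF, takeSeq, h]

lemma fF_takeSeq_eq_of_vanishesFrom {s : ℕ → Option γ} {N M : ℕ} (h : VanishesFrom s N)
    (hNM : N ≤ M) : fF (takeSeq s M) = fF (takeSeq s N) := by
  obtain ⟨d, rfl⟩ := Nat.exists_eq_add_of_le hNM
  rw [takeSeq_add, fF_append, fF_takeSeq_eq_nil fun k _ => h _ (Nat.le_add_right N k),
    List.append_nil]

lemma squash_eq_fF_takeSeq {s : ℕ → Option γ} {N : ℕ} (h : VanishesFrom s N) :
    squash s = fF (takeSeq s N) :=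
  (fF_takeSeq_eq_of_vanishesFrom (Nat.sInf_mem (s := {N | VanishesFrom s N}) ⟨N, h⟩)
    (Nat.sInf_le h)).symm

lemma squash_none : squash (fun _ => (none : Option γ)) = [] := by
  simp [squash_eq_fF_takeSeq (N := 0) fun _ _ => rfl, takeSeq, fF]

lemma mem_squash {s : ℕ → Option γ} {c : γ} (h : c ∈ squash s) : ∃ k, s k = some c := by
  simp only [squash, fF, takeSeq, List.mem_filterMap, List.mem_ofFn, id] at h
  obtain ⟨_, ⟨i, rfl⟩, hi⟩ := h
  exact ⟨i, hi⟩

lemma fF_takeSeq_prefix_squash {s : ℕ → Option γ} (hs : {k | s k ≠ none}.Finite) (n : ℕ) :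
    fF (takeSeq s n) <+: squash s := by
  obtain ⟨N, hN, hnN⟩ := ((eventually_vanishesFrom hs).and (eventually_ge_atTop n)).exists
  obtain ⟨d, rfl⟩ := Nat.exists_eq_add_of_le hnN
  rw [squash_eq_fF_takeSeq hN, takeSeq_add, fF_append]
  exact List.prefix_append _ _

lemma squash_eq_append_squash_shift {s : ℕ → Option γ} (hs : {k | s k ≠ none}.Finite) (n : ℕ) :
    squash s = fF (takeSeq s n) ++ squash (fun k => s (n + k)) := by
  obtain ⟨N, hN, hnN⟩ := ((eventually_vanishesFrom hs).and (eventually_ge_atTop n)).exists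
  obtain ⟨d, rfl⟩ := Nat.exists_eq_add_of_le hnN
  rw [squash_eq_fF_takeSeq hN, takeSeq_add, fF_append,
    squash_eq_fF_takeSeq (N := d) fun k hk => hN _ (by omega)]

lemma squash_eq_append_of_eqOn {s s' : ℕ → Option γ} {N : ℕ} (hs : VanishesFrom s N)
    (hs' : {k | s' k ≠ none}.Finite) (h : ∀ k < N, s' k = s k) :
    squash s' = squash s ++ squash (fun k => s' (N + k)) := by
  rw [squash_eq_append_squash_shift hs' N, squash_eq_fF_takeSeq hs,
    takeSeq_eq_takeSeq_iff.2 h]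

lemma squash_getElem? (l : List γ) : squash (fun k => l[k]?) = l := by
  rw [squash_eq_fF_takeSeq (N := l.length) fun k hk => List.getElem?_eq_none hk]
  simp [fF, takeSeq]

end Sequences

lemma shiftSeq_finite {s : Seq3} (hs : {k | s k ≠ none}.Finite) (n : ℕ) :
    {k | shiftSeq s n k ≠ none}.Finite :=
  hs.preimage (add_right_injective n).injOn

lemma truncSeq_vanishesFrom (s : Seq3) (n : ℕ) : VanishesFrom (truncSeq s n) n :=
  fun _ hk => if_neg (not_lt.2 hk)

lemma truncSeq_eq_self {s : Seq3} {N : ℕ} (h : VanishesFrom s N) : truncSeq s N = s := by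
  funext k
  by_cases hk : k < N
  · simp [truncSeq, hk]
  · simp [truncSeq, hk, h k (not_lt.1 hk)]

lemma shiftSeq_eq_none {s : Seq3} {N : ℕ} (h : VanishesFrom s N) :
    shiftSeq s N = fun _ => none :=
  funext fun k => h (N + k) (Nat.le_add_right N k)

namespace Wom

/-- The path `α↾N · γ`. -/
def truncAppend (α : Wom) (N : ℕ) (γ : Wom) : Wom :=
  ⟨fun k => if k < N then α.1 k else γ.1 (k - N), by
    obtain ⟨M, hM⟩ := (eventually_vanishesFrom γ.2).exists
    refine VanishesFrom.finite (N := N + M) fun k hk => ?_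
    simp only [if_neg (show ¬k < N by omega)]
    exact hM _ (by omega)⟩

variable {α γ : Wom} {N M : ℕ}

lemma truncAppend_apply_of_lt {k : ℕ} (hk : k < N) : (α.truncAppend N γ).1 k = α.1 k :=
  if_pos hk

lemma shiftSeq_truncAppend : shiftSeq (α.truncAppend N γ).1 N = γ.1 := by
  funext k
  simp [shiftSeq, truncAppend]

lemma truncAppend_vanishesFrom (hγ : VanishesFrom γ.1 M) :
    VanishesFrom (α.truncAppend N γ).1 (N + M) := fun k hk => by
  simp only [truncAppend, if_neg (show ¬k < N by omega)]
  exact hγ _ (by omega)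

end Wom

lemma interleave_vanishesFrom {α β : Seq3} {N : ℕ} (hα : VanishesFrom α N)
    (hβ : VanishesFrom β N) : VanishesFrom (interleave α β) (2 * N) := fun k hk => by
  unfold interleave
  split_ifs
  · rw [hα _ (by omega), Option.map_none]
  · rw [hβ _ (by omega), Option.map_none]

lemma interleave_finite {α β : Seq3} (hα : {k | α k ≠ none}.Finite)
    (hβ : {k | β k ≠ none}.Finite) : {k | interleave α β k ≠ none}.Finite := by
  obtain ⟨N, hαN, hβN⟩ := ((eventually_vanishesFrom hα).and (eventually_vanishesFrom hβ)).exists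
  exact (interleave_vanishesFrom hαN hβN).finite

lemma interleave_shift (α β : Seq3) (N : ℕ) :
    (fun k => interleave α β (2 * N + k)) = interleave (shiftSeq α N) (shiftSeq β N) := by
  funext k
  have h₁ : (2 * N + k) / 2 = N + k / 2 := by omega
  have h₂ : (2 * N + k) % 2 = k % 2 := by omega
  simp [interleave, shiftSeq, h₁, h₂]

lemma gmap_eq_append_of_eqOn {α β α' β' : Seq3} {N : ℕ} (hα : VanishesFrom α N)
    (hβ : VanishesFrom β N) (hα' : {k | α' k ≠ none}.Finite) (hβ' : {k | β' k ≠ none}.Finite)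
    (hαα' : ∀ k < N, α' k = α k) (hββ' : ∀ k < N, β' k = β k) :
    gmap α' β' = gmap α β ++ gmap (shiftSeq α' N) (shiftSeq β' N) := by
  rw [gmap, squash_eq_append_of_eqOn (interleave_vanishesFrom hα hβ) (interleave_finite hα' hβ'),
    interleave_shift]
  · rfl
  · intro k hk
    simp only [interleave, hαα' _ (show k / 2 < N by omega), hββ' _ (show k / 2 < N by omega)]

lemma fF_takeSeq_interleave_none_right (γ : Seq3) (N : ℕ) :
    fF (takeSeq (interleave γ fun _ => none) (2 * N)) =
      (fF (takeSeq γ N)).map (Prod.mk false) := by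
  induction N with
  | zero => simp [takeSeq, fF]
  | succ N ih =>
    rw [show 2 * (N + 1) = 2 * N + 2 by ring, takeSeq_add, takeSeq_add, fF_append, fF_append, ih]
    rcases h : γ N <;> simp [takeSeq, fF, interleave, h]

lemma gmap_none_right {γ : Seq3} (hγ : {k | γ k ≠ none}.Finite) :
    gmap γ (fun _ => none) = (squash γ).map (Prod.mk false) := by
  obtain ⟨N, hN⟩ := (eventually_vanishesFrom hγ).exists
  rw [gmap, squash_eq_fF_takeSeq (interleave_vanishesFrom hN fun _ _ => rfl),
    fF_takeSeq_interleave_none_right, squash_eq_fF_takeSeq hN]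

lemma fF_takeSeq_interleave_none_left (γ : Seq3) (N : ℕ) :
    fF (takeSeq (interleave (fun _ => none) γ) (2 * N)) =
      (fF (takeSeq γ N)).map (Prod.mk true) := by
  induction N with
  | zero => simp [takeSeq, fF]
  | succ N ih =>
    have h₁ : (2 * N + 1) / 2 = N := by omega
    rw [show 2 * (N + 1) = 2 * N + 2 by ring, takeSeq_add, takeSeq_add, fF_append, fF_append, ih]
    rcases h : γ N <;> simp [takeSeq, fF, interleave, h, h₁]

lemma gmap_none_left {γ : Seq3} (hγ : {k | γ k ≠ none}.Finite) :
    gmap (fun _ => none) γ = (squash γ).map (Prod.mk true) := by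
  obtain ⟨N, hN⟩ := (eventually_vanishesFrom hγ).exists
  rw [gmap, squash_eq_fF_takeSeq (interleave_vanishesFrom (fun _ _ => rfl) hN),
    fF_takeSeq_interleave_none_left, squash_eq_fF_takeSeq hN]

lemma R1T_append_gmap_none_right (w : T22) (γ : Seq3) :
    R1T w (w ++ gmap γ fun _ => none) := by
  refine ⟨_, fun l hl => ?_, rfl⟩
  obtain ⟨k, hk⟩ := mem_squash hl
  unfold interleave at hk
  split_ifs at hk
  · obtain ⟨i, -, rfl⟩ := Option.map_eq_some_iff.1 hk
    rfl
  · simp at hk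

lemma R2T_append_gmap_none_left (w : T22) (γ : Seq3) :
    R2T w (w ++ gmap (fun _ => none) γ) := by
  refine ⟨_, fun l hl => ?_, rfl⟩
  obtain ⟨k, hk⟩ := mem_squash hl
  unfold interleave at hk
  split_ifs at hk
  · simp at hk
  · obtain ⟨i, -, rfl⟩ := Option.map_eq_some_iff.1 hk
    rfl

lemma exists_squash_eq (l : List (Fin 2)) : ∃ γ : Wom, squash γ.1 = l :=
  ⟨⟨fun k => l[k]?, VanishesFrom.finite (N := l.length) fun k hk => by simp [hk]⟩,
    squash_getElem? l⟩

lemma exists_gmap_none_right_of_R1T {w w' : T22} (h : R1T w w') :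
    ∃ γ : Wom, w' = w ++ gmap γ.1 fun _ => none := by
  obtain ⟨c, hc, rfl⟩ := h
  obtain ⟨γ, hγ⟩ := exists_squash_eq (c.map Prod.snd)
  refine ⟨γ, ?_⟩
  rw [gmap_none_right γ.2, hγ, List.map_map]
  conv_lhs => rw [← List.map_id c]
  exact congrArg _ (List.map_congr_left fun l hl => by simp [← hc l hl])

lemma exists_gmap_none_left_of_R2T {w w' : T22} (h : R2T w w') :
    ∃ γ : Wom, w' = w ++ gmap (fun _ => none) γ.1 := by
  obtain ⟨d, hd, rfl⟩ := h
  obtain ⟨γ, hγ⟩ := exists_squash_eq (d.map Prod.snd)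
  refine ⟨γ, ?_⟩
  rw [gmap_none_left γ.2, hγ, List.map_map]
  conv_lhs => rw [← List.map_id d]
  exact congrArg _ (List.map_congr_left fun l hl => by simp [← hd l hl])

lemma exists_squash_of_prefix {b b' : T2W} (h : b <+: b') : ∃ γ : Wom, b' = b ++ squash γ.1 := by
  obtain ⟨e, rfl⟩ := h
  obtain ⟨γ, hγ⟩ := exists_squash_eq e
  exact ⟨γ, hγ ▸ rfl⟩

lemma R1T_refl (w : T22) : R1T w w := ⟨[], by simp, by simp⟩

lemma R1T.trans {u v w : T22} (h₁ : R1T u v) (h₂ : R1T v w) : R1T u w := by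
  obtain ⟨c, hc, rfl⟩ := h₁
  obtain ⟨d, hd, rfl⟩ := h₂
  exact ⟨c ++ d, fun l hl => (List.mem_append.1 hl).elim (hc l) (hd l), by simp⟩

lemma R2T_refl (w : T22) : R2T w w := ⟨[], by simp, by simp⟩

lemma R2T.trans {u v w : T22} (h₁ : R2T u v) (h₂ : R2T v w) : R2T u w := by
  obtain ⟨c, hc, rfl⟩ := h₁
  obtain ⟨d, hd, rfl⟩ := h₂
  exact ⟨c ++ d, fun l hl => (List.mem_append.1 hl).elim (hc l) (hd l), by simp⟩

instance : IsTrans W222 R1' := inferInstanceAs (IsTrans W222 (Relation.ReflTransGen R1'gen))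

instance : Std.Refl R1' := inferInstanceAs (Std.Refl (Relation.ReflTransGen R1'gen))

instance : IsTrans W222 R2' := inferInstanceAs (IsTrans W222 (Relation.ReflTransGen R2'gen))

instance : Std.Refl R2' := inferInstanceAs (Std.Refl (Relation.ReflTransGen R2'gen))

lemma R1'_none_iff {w : T22} {u : W222} :
    R1' (w, none) u ↔ ∃ w', R1T w w' ∧ (u = (w', none) ∨ u = (w', some [])) := by
  constructor
  · intro h
    induction h with
    | refl => exact ⟨w, R1T_refl w, Or.inl rfl⟩
    | tail _ hstep ih =>
      obtain ⟨w', hw', rfl | rfl⟩ := ih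
      · rcases hstep with ⟨a, a', ha, ⟨⟩, rfl⟩ | ⟨a, ⟨⟩, rfl⟩
        · exact ⟨a', hw'.trans ha, Or.inl rfl⟩
        · exact ⟨w', hw', Or.inr rfl⟩
      · rcases hstep with ⟨_, _, _, ⟨⟩, _⟩ | ⟨_, ⟨⟩, _⟩
  · rintro ⟨w', hw', rfl | rfl⟩
    · exact .single (Or.inl ⟨_, _, hw', rfl, rfl⟩)
    · exact .tail (.single (Or.inl ⟨_, _, hw', rfl, rfl⟩)) (Or.inr ⟨_, rfl, rfl⟩)

lemma R1'_some_iff {w : T22} {b : T2W} {u : W222} : R1' (w, some b) u ↔ u = (w, some b) := by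
  refine ⟨fun h => ?_, fun h => h ▸ .refl⟩
  induction h with
  | refl => rfl
  | tail _ hstep ih =>
    subst ih
    rcases hstep with ⟨_, _, _, ⟨⟩, _⟩ | ⟨_, ⟨⟩, _⟩

lemma R2'_none_iff {w : T22} {u : W222} :
    R2' (w, none) u ↔ ∃ w', R2T w w' ∧ u = (w', none) := by
  constructor
  · intro h
    induction h with
    | refl => exact ⟨w, R2T_refl w, rfl⟩
    | tail _ hstep ih =>
      obtain ⟨w', hw', rfl⟩ := ih
      rcases hstep with ⟨a, a', ha, ⟨⟩, rfl⟩ | ⟨_, _, _, _, ⟨⟩, _⟩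
      exact ⟨a', hw'.trans ha, rfl⟩
  · rintro ⟨w', hw', rfl⟩
    exact .single (Or.inl ⟨_, _, hw', rfl, rfl⟩)

lemma R2'_some_iff {w : T22} {b : T2W} {u : W222} :
    R2' (w, some b) u ↔ ∃ b', b <+: b' ∧ u = (w, some b') := by
  constructor
  · intro h
    induction h with
    | refl => exact ⟨b, List.prefix_refl b, rfl⟩
    | tail _ hstep ih =>
      obtain ⟨b', hb', rfl⟩ := ih
      rcases hstep with ⟨_, _, _, ⟨⟩, _⟩ | ⟨a, _, b'', hb'', ⟨⟩, rfl⟩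
      exact ⟨b'', hb'.trans hb'', rfl⟩
  · rintro ⟨b', hb', rfl⟩
    exact .single (Or.inr ⟨_, _, _, hb', rfl, rfl⟩)

section Alexandrov

variable {X W : Type} {t : TopologicalSpace X} {R : W → W → Prop} {f : X → W}

lemma continuous_alexandrov [IsTrans W R] (h : ∀ x, ∀ᶠ y in @nhds X t x, R (f x) (f y)) :
    Continuous[t, alexandrov R] f := by
  refine continuous_generateFrom_iff.2 ?_
  rintro _ ⟨w, rfl⟩
  exact isOpen_iff_mem_nhds.2 fun x hx => (h x).mono fun y hy => trans_of R hx hy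

lemma isOpenMap_alexandrov [Std.Refl R]
    (h : ∀ x, ∀ U ∈ @nhds X t x, {w | R (f x) w} ⊆ f '' U) :
    @IsOpenMap X W t (alexandrov R) f := by
  intro U hU
  refine @isOpen_iff_forall_mem_open _ (alexandrov R) _ |>.2 ?_
  rintro _ ⟨x, hx, rfl⟩
  exact ⟨_, h x U (hU.mem_nhds hx), isOpen_generateFrom_of_mem ⟨f x, rfl⟩, refl_of R (f x)⟩

end Alexandrov

lemma hasAntitoneBasis_nhds_generateFrom {X : Type} {g : Set (Set X)} {a : X} {V : ℕ → Set X}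
    (hV : Antitone V) (hVo : ∀ i, IsOpen[generateFrom g] (V i)) (ha : ∀ i, a ∈ V i)
    (hg : ∀ s ∈ g, a ∈ s → ∃ i, V i ⊆ s) :
    (@nhds X (generateFrom g) a).HasAntitoneBasis V := by
  let := generateFrom g
  suffices 𝓝 a = ⨅ i, 𝓟 (V i) from this ▸ HasAntitoneBasis.iInf_principal hV
  refine le_antisymm (le_iInf fun i => le_principal_iff.2 ((hVo i).mem_nhds (ha i))) ?_
  rw [nhds_generateFrom]
  refine le_iInf₂ fun s ⟨has, hs⟩ => ?_
  obtain ⟨i, hi⟩ := hg s hs has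
  exact iInf_le_of_le i (principal_mono.2 hi)

section Bitopological

variable {X Y : Type}

lemma horiz_eq_prod (t : TopologicalSpace X) : horiz t = @instTopologicalSpaceProd X Y t ⊥ := by
  let := t
  let : TopologicalSpace Y := ⊥
  have : DiscreteTopology Y := ⟨rfl⟩
  rw [(isTopologicalBasis_opens.prod (isTopologicalBasis_singletons Y)).eq_generateFrom, horiz]
  congr 1
  ext S
  simp only [and_comm, exists_and_right, Set.mem_ofPred_eq, Set.image2, eq_comm, ↓existsAndEq,
    true_and]
  exact Iff.rfl

lemma vert_eq_prod (t : TopologicalSpace Y) : vert t = @instTopologicalSpaceProd X Y ⊥ t := by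
  let := t
  let : TopologicalSpace X := ⊥
  have : DiscreteTopology X := ⟨rfl⟩
  rw [((isTopologicalBasis_singletons X).prod isTopologicalBasis_opens).eq_generateFrom, vert]
  congr 1
  ext S
  simp only [Set.mem_ofPred_eq, Set.image2, eq_comm, ↓existsAndEq, true_and]
  exact Iff.rfl

lemma nhds_horiz (t : TopologicalSpace X) (x : X) (y : Y) :
    @nhds _ (horiz t) (x, y) = map (fun x' => (x', y)) (@nhds X t x) := by
  let := t
  let : TopologicalSpace Y := ⊥
  have : DiscreteTopology Y := ⟨rfl⟩
  rw [horiz_eq_prod, nhds_prod_eq, nhds_discrete Y, prod_pure]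

lemma nhds_vert (t : TopologicalSpace Y) (x : X) (y : Y) :
    @nhds _ (vert t) (x, y) = map (fun y' => (x, y')) (@nhds Y t y) := by
  let := t
  let : TopologicalSpace X := ⊥
  have : DiscreteTopology X := ⟨rfl⟩
  rw [vert_eq_prod, nhds_prod_eq, nhds_discrete X, pure_prod]

end Bitopological

-- `f_F(β↾k) ⊑ f_ω(β)` holds for every pseudo-infinite `β`, so the prefix condition is redundant.
lemma Uset_eq (α : Wom) (k : ℕ) : Uset α k = {β | ∀ i < k, β.1 i = α.1 i} := by
  ext β
  refine ⟨fun h => takeSeq_eq_takeSeq_iff.1 h.1, fun h => ⟨takeSeq_eq_takeSeq_iff.2 h, ?_⟩⟩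
  rw [← takeSeq_eq_takeSeq_iff.2 h]
  exact fF_takeSeq_prefix_squash β.2 k

lemma mem_Uset_self (α : Wom) (k : ℕ) : α ∈ Uset α k := by
  simp [Uset_eq]

lemma Uset_antitone (α : Wom) : Antitone (Uset α) := fun k k' hkk' β hβ => by
  rw [Uset_eq] at hβ ⊢
  exact fun i hi => hβ i (hi.trans_le hkk')

lemma Uset_subset_of_mem {α β : Wom} {k : ℕ} (h : β ∈ Uset α k) : Uset β k ⊆ Uset α k := by
  simp only [Uset_eq] at h ⊢
  exact fun γ hγ i hi => (hγ i hi).trans (h i hi)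

lemma Tom_hasAntitoneBasis_nhds (β : Wom) : (@nhds _ Tom β).HasAntitoneBasis (Uset β) := by
  refine hasAntitoneBasis_nhds_generateFrom (Uset_antitone β) (fun k => ?_) (mem_Uset_self β) ?_
  · rcases k.eq_zero_or_pos with rfl | hk
    · simp [Uset_eq]
    · exact isOpen_generateFrom_of_mem ⟨β, k, hk, rfl⟩
  · rintro _ ⟨α, k, -, rfl⟩ hβ
    exact ⟨k, Uset_subset_of_mem hβ⟩

lemma mem_U'set_zero {α : Wom} {K : ℕ} {x : Wom × ℕ} :
    x ∈ U'set α K 0 ↔ x.1 ∈ Uset α K ∧ (x.2 = 0 ∨ K ≤ x.2) := by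
  simp [U'set, and_or_left]

lemma U'set_of_ne_zero (α : Wom) (k : ℕ) {n : ℕ} (hn : n ≠ 0) : U'set α k n = {(α, n)} :=
  if_neg hn

lemma TX_hasAntitoneBasis_nhds_zero (α : Wom) :
    (@nhds _ TX (α, 0)).HasAntitoneBasis (fun K => U'set α K 0) := by
  refine hasAntitoneBasis_nhds_generateFrom (fun K K' hKK' x hx => ?_)
    (fun K => isOpen_generateFrom_of_mem ⟨α, K, 0, rfl⟩)
    (fun K => mem_U'set_zero.2 ⟨mem_Uset_self α K, Or.inl rfl⟩) ?_
  · rw [mem_U'set_zero] at hx ⊢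
    exact ⟨Uset_antitone α hKK' hx.1, hx.2.imp_right hKK'.trans⟩
  · rintro _ ⟨α', k, n, rfl⟩ hα
    rcases eq_or_ne n 0 with rfl | hn
    · refine ⟨k, fun x hx => ?_⟩
      rw [mem_U'set_zero] at hα hx ⊢
      exact ⟨Uset_subset_of_mem hα.1 hx.1, hx.2⟩
    · rw [U'set_of_ne_zero α' k hn, Set.mem_singleton_iff, Prod.mk.injEq] at hα
      exact absurd hα.2.symm hn

lemma TX_singleton_mem_nhds (α : Wom) {n : ℕ} (hn : n ≠ 0) : {(α, n)} ∈ @nhds _ TX (α, n) :=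
  @IsOpen.mem_nhds _ TX _ _ (U'set_of_ne_zero α 0 hn ▸ isOpen_generateFrom_of_mem ⟨α, 0, n, rfl⟩)
    rfl

lemma fXY_zero (α β : Wom) : fXY ((α, 0), β) = (gmap α.1 β.1, none) :=
  if_pos rfl

lemma fXY_of_ne_zero (α β : Wom) {n : ℕ} (hn : n ≠ 0) :
    fXY ((α, n), β) =
      (gmap (truncSeq α.1 n) (truncSeq β.1 n), some (squash (shiftSeq β.1 n))) :=
  if_neg hn

section Neighbours

variable {α β : Wom} {K : ℕ}

lemma fXY_zero_of_eqOn_left (hα : VanishesFrom α.1 K) (hβ : VanishesFrom β.1 K) {α' : Wom}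
    (h : ∀ k < K, α'.1 k = α.1 k) :
    fXY ((α', 0), β) = (gmap α.1 β.1 ++ gmap (shiftSeq α'.1 K) (fun _ => none), none) := by
  rw [fXY_zero, gmap_eq_append_of_eqOn hα hβ α'.2 β.2 h fun _ _ => rfl, shiftSeq_eq_none hβ]

lemma fXY_of_eqOn_left (hα : VanishesFrom α.1 K) (hβ : VanishesFrom β.1 K) {α' : Wom}
    (h : ∀ k < K, α'.1 k = α.1 k) {m : ℕ} (hm : m ≠ 0) (hKm : K ≤ m) :
    fXY ((α', m), β) =
      (gmap α.1 β.1 ++ gmap (shiftSeq (truncSeq α'.1 m) K) (fun _ => none), some []) := by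
  have htrunc : ∀ k < K, truncSeq α'.1 m k = α.1 k := fun k hk => by
    rw [truncSeq, if_pos (by omega), h k hk]
  rw [fXY_of_ne_zero α' β hm, truncSeq_eq_self (hβ.mono hKm), shiftSeq_eq_none (hβ.mono hKm),
    squash_none, gmap_eq_append_of_eqOn hα hβ (truncSeq_vanishesFrom α'.1 m).finite β.2 htrunc
      fun _ _ => rfl, shiftSeq_eq_none hβ]

lemma fXY_zero_of_eqOn_right (hα : VanishesFrom α.1 K) (hβ : VanishesFrom β.1 K) {β' : Wom}
    (h : ∀ k < K, β'.1 k = β.1 k) :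
    fXY ((α, 0), β') = (gmap α.1 β.1 ++ gmap (fun _ => none) (shiftSeq β'.1 K), none) := by
  rw [fXY_zero, gmap_eq_append_of_eqOn hα hβ α.2 β'.2 (fun _ _ => rfl) h, shiftSeq_eq_none hα]

lemma fXY_of_eqOn_right (hβ : VanishesFrom β.1 K) {n : ℕ} (hn : n ≠ 0) (hnK : n ≤ K)
    {β' : Wom} (h : ∀ k < K, β'.1 k = β.1 k) :
    fXY ((α, n), β') = (gmap (truncSeq α.1 n) (truncSeq β.1 n),
      some (squash (shiftSeq β.1 n) ++ squash (shiftSeq β'.1 K))) := by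
  have htrunc : truncSeq β'.1 n = truncSeq β.1 n := by
    funext k
    by_cases hk : k < n
    · simp [truncSeq, hk, h k (by omega)]
    · simp [truncSeq, hk]
  have hshift : (fun k => shiftSeq β'.1 n (K - n + k)) = shiftSeq β'.1 K := by
    funext k
    simp only [shiftSeq, show n + (K - n + k) = K + k by omega]
  rw [fXY_of_ne_zero α β' hn, htrunc, squash_eq_append_of_eqOn (N := K - n)
    (fun k hk => hβ _ (by omega)) (shiftSeq_finite β'.2 n) (fun k hk => h _ (by omega)), hshift]
  rfl

end Neighbours

lemma fXY_horiz_forth (x : (Wom × ℕ) × Wom) :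
    ∀ᶠ y in @nhds _ (horiz TX) x, R1' (fXY x) (fXY y) := by
  obtain ⟨⟨α, n⟩, β⟩ := x
  rw [nhds_horiz, eventually_map]
  rcases eq_or_ne n 0 with rfl | hn
  · obtain ⟨K, hαK, hβK⟩ :=
      ((eventually_vanishesFrom α.2).and (eventually_vanishesFrom β.2)).exists
    refine mem_of_superset ((TX_hasAntitoneBasis_nhds_zero α).mem K) ?_
    rintro ⟨α', m⟩ hx
    obtain ⟨hα', hm⟩ := mem_U'set_zero.1 hx
    rw [Uset_eq] at hα'
    change R1' _ _
    rw [fXY_zero, R1'_none_iff]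
    rcases eq_or_ne m 0 with rfl | hm0
    · exact ⟨_, R1T_append_gmap_none_right _ _, Or.inl (fXY_zero_of_eqOn_left hαK hβK hα')⟩
    · exact ⟨_, R1T_append_gmap_none_right _ _,
        Or.inr (fXY_of_eqOn_left hαK hβK hα' hm0 (hm.resolve_left hm0))⟩
  · filter_upwards [TX_singleton_mem_nhds α hn] with x hx
    rw [Set.mem_singleton_iff.1 hx]
    exact .refl

lemma fXY_horiz_back (x : (Wom × ℕ) × Wom) (U : Set ((Wom × ℕ) × Wom))
    (hU : U ∈ @nhds _ (horiz TX) x) : {u | R1' (fXY x) u} ⊆ fXY '' U := by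
  obtain ⟨⟨α, n⟩, β⟩ := x
  rw [nhds_horiz, mem_map] at hU
  intro u (hu : R1' _ u)
  rcases eq_or_ne n 0 with rfl | hn
  · obtain ⟨K, hKU, hK, hαK, hβK⟩ :=
      ((TX_hasAntitoneBasis_nhds_zero α).eventually_subset hU |>.and <|
        (eventually_gt_atTop 0).and <|
        (eventually_vanishesFrom α.2).and (eventually_vanishesFrom β.2)).exists
    have hα' : ∀ γ : Wom, ∀ k < K, (α.truncAppend K γ).1 k = α.1 k :=
      fun γ k => Wom.truncAppend_apply_of_lt
    have hmem : ∀ γ : Wom, α.truncAppend K γ ∈ Uset α K := fun γ => by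
      rw [Uset_eq]; exact hα' γ
    rw [fXY_zero, R1'_none_iff] at hu
    obtain ⟨w', hw', rfl | rfl⟩ := hu <;> obtain ⟨γ, rfl⟩ := exists_gmap_none_right_of_R1T hw'
    · refine ⟨((α.truncAppend K γ, 0), β), hKU (mem_U'set_zero.2 ⟨hmem γ, Or.inl rfl⟩), ?_⟩
      rw [fXY_zero_of_eqOn_left hαK hβK (hα' γ), Wom.shiftSeq_truncAppend]
    · obtain ⟨M, hM⟩ := (eventually_vanishesFrom γ.2).exists
      refine ⟨((α.truncAppend K γ, K + M), β),
        hKU (mem_U'set_zero.2 ⟨hmem γ, Or.inr (Nat.le_add_right K M)⟩), ?_⟩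
      rw [fXY_of_eqOn_left hαK hβK (hα' γ) (by omega) (Nat.le_add_right K M),
        truncSeq_eq_self (Wom.truncAppend_vanishesFrom hM), Wom.shiftSeq_truncAppend]
  · rw [fXY_of_ne_zero α β hn, R1'_some_iff] at hu
    exact ⟨_, @mem_of_mem_nhds _ TX _ _ hU, (fXY_of_ne_zero α β hn).trans hu.symm⟩

lemma fXY_vert_forth (x : (Wom × ℕ) × Wom) :
    ∀ᶠ y in @nhds _ (vert Tom) x, R2' (fXY x) (fXY y) := by
  obtain ⟨⟨α, n⟩, β⟩ := x
  rw [nhds_vert, eventually_map]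
  obtain ⟨K, hnK, hαK, hβK⟩ := ((eventually_ge_atTop n).and <|
    (eventually_vanishesFrom α.2).and (eventually_vanishesFrom β.2)).exists
  refine mem_of_superset ((Tom_hasAntitoneBasis_nhds β).mem K) fun β' hβ' => ?_
  rw [Uset_eq] at hβ'
  change R2' _ _
  rcases eq_or_ne n 0 with rfl | hn
  · rw [fXY_zero, fXY_zero_of_eqOn_right hαK hβK hβ', R2'_none_iff]
    exact ⟨_, R2T_append_gmap_none_left _ _, rfl⟩
  · rw [fXY_of_ne_zero α β hn, fXY_of_eqOn_right hβK hn hnK hβ', R2'_some_iff]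
    exact ⟨_, List.prefix_append _ _, rfl⟩

lemma fXY_vert_back (x : (Wom × ℕ) × Wom) (U : Set ((Wom × ℕ) × Wom))
    (hU : U ∈ @nhds _ (vert Tom) x) : {u | R2' (fXY x) u} ⊆ fXY '' U := by
  obtain ⟨⟨α, n⟩, β⟩ := x
  rw [nhds_vert, mem_map] at hU
  obtain ⟨K, hKU, hnK, hαK, hβK⟩ :=
    ((Tom_hasAntitoneBasis_nhds β).eventually_subset hU |>.and <| (eventually_ge_atTop n).and <|
      (eventually_vanishesFrom α.2).and (eventually_vanishesFrom β.2)).exists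
  have hβ' : ∀ γ : Wom, ∀ k < K, (β.truncAppend K γ).1 k = β.1 k :=
    fun γ k => Wom.truncAppend_apply_of_lt
  have hmem : ∀ γ : Wom, ((α, n), β.truncAppend K γ) ∈ U := fun γ =>
    hKU (by rw [Uset_eq]; exact hβ' γ)
  intro u (hu : R2' _ u)
  rcases eq_or_ne n 0 with rfl | hn
  · rw [fXY_zero, R2'_none_iff] at hu
    obtain ⟨w', hw', rfl⟩ := hu
    obtain ⟨γ, rfl⟩ := exists_gmap_none_left_of_R2T hw'
    exact ⟨_, hmem γ, by rw [fXY_zero_of_eqOn_right hαK hβK (hβ' γ), Wom.shiftSeq_truncAppend]⟩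
  · rw [fXY_of_ne_zero α β hn, R2'_some_iff] at hu
    obtain ⟨b', hb', rfl⟩ := hu
    obtain ⟨γ, rfl⟩ := exists_squash_of_prefix hb'
    exact ⟨_, hmem γ, by rw [fXY_of_eqOn_right hβK hn hnK (hβ' γ), Wom.shiftSeq_truncAppend]⟩

lemma root_reflTransGen_R1'_or_R2' (u : W222) :
    Relation.ReflTransGen (fun x y => R1' x y ∨ R2' x y) ([], none) u := by
  have hnone : ∀ w : T22, Relation.ReflTransGen (fun x y => R1' x y ∨ R2' x y) ([], none)
      (w, none) := by
    intro w
    induction w using List.reverseRecOn with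
    | nil => exact .refl
    | append_singleton w l ih =>
      refine ih.tail ?_
      rcases l with ⟨_ | _, i⟩
      · exact Or.inl (R1'_none_iff.2 ⟨_, ⟨[(false, i)], by simp, rfl⟩, Or.inl rfl⟩)
      · exact Or.inr (R2'_none_iff.2 ⟨_, ⟨[(true, i)], by simp, rfl⟩, rfl⟩)
  obtain ⟨w, _ | b⟩ := u
  · exact hnone w
  · exact ((hnone w).tail (Or.inl (R1'_none_iff.2 ⟨w, R1T_refl w, Or.inr rfl⟩))).tail
      (Or.inr (R2'_some_iff.2 ⟨b, List.nil_prefix, rfl⟩))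

lemma fXY_surjective : Function.Surjective fXY := by
  intro u
  induction root_reflTransGen_R1'_or_R2' u with
  | refl =>
    let zero : Wom := ⟨fun _ => none, by simp⟩
    refine ⟨((zero, 0), zero), ?_⟩
    rw [fXY_zero, gmap_none_right zero.2, squash_none, List.map_nil]
  | tail _ hstep ih =>
    obtain ⟨x, rfl⟩ := ih
    obtain ⟨y, -, hy⟩ := hstep.elim (fun h => fXY_horiz_back x Set.univ univ_mem h)
      (fun h => fXY_vert_back x Set.univ univ_mem h)
    exact ⟨y, hy⟩

/-- the map f is a p-morphism from the bitopological product
𝔛 × 𝒴 onto Top₂(𝕋₂,₂₊₂). -/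
theorem fXY_pmorphism :
    Function.Surjective fXY ∧
    @Continuous _ _ (horiz TX) (alexandrov R1') fXY ∧
    @IsOpenMap _ _ (horiz TX) (alexandrov R1') fXY ∧
    @Continuous _ _ (vert Tom) (alexandrov R2') fXY ∧
    @IsOpenMap _ _ (vert Tom) (alexandrov R2') fXY :=
  ⟨fXY_surjective, continuous_alexandrov fXY_horiz_forth, isOpenMap_alexandrov fXY_horiz_back,
    continuous_alexandrov fXY_vert_forth, isOpenMap_alexandrov fXY_vert_back⟩
end

section
/- The frame 𝕋_{2,2+2} validates the logic L = S4.1 ∗ S4 + ◇₁□₂(◇₁p → □₁p): R₁′ and R₂′ are reflexive and transitive, every formula of S4.1 with □ read as □₁ is valid in 𝕋_{2,2+2}, every formula of S4 with □ read as □₂ is valid, and ◇₁□₂(◇₁p → □₁p) is valid. -/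
/- ============== Auxiliary lemmas ============== -/

section Aux

lemma BSat_subst {W : Type} (R : Fin 2 → W → W → Prop) (V : ℕ → W → Prop)
    (σ : ℕ → BForm) : ∀ (A : BForm) (x : W),
    BSat R V x (A.subst σ) ↔ BSat R (fun n y => BSat R V y (σ n)) x A := by
  intro A
  induction A with
  | var n => intro x; rfl
  | bot => intro x; rfl
  | imp A B ihA ihB => intro x; simp only [BForm.subst, BSat, ihA, ihB]
  | box i A ih => intro x; simp only [BForm.subst, BSat, ih]

lemma toB_subst (i : Fin 2) (σ : ℕ → MForm) : ∀ (A : MForm),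
    (A.subst σ).toB i = (A.toB i).subst (fun n => (σ n).toB i) := by
  intro A
  induction A with
  | var n => rfl
  | bot => rfl
  | imp A B ihA ihB => simp only [MForm.subst, MForm.toB, BForm.subst, ihA, ihB]
  | box A ih => simp only [MForm.subst, MForm.toB, BForm.subst, ih]

lemma MProv_sound {W : Type} (R : Fin 2 → W → W → Prop) (i : Fin 2) (Ax : Set MForm)
    (hAx : ∀ A ∈ Ax, BValid R (A.toB i)) :
    ∀ {A : MForm}, MProv Ax A → BValid R (A.toB i) := by
  intro A h
  induction h with
  | axm h => exact hAx _ h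
  | pl1 => intro V x; simp only [MForm.toB, BSat]; tauto
  | pl2 => intro V x; simp only [MForm.toB, BSat]; tauto
  | pl3 => intro V x; simp only [MForm.neg, MForm.toB, BSat]; tauto
  | kax => intro V x; simp only [MForm.toB, BSat]
           intro h1 h2 y hy; exact h1 y hy (h2 y hy)
  | mp _ _ ih1 ih2 => intro V x; exact ih1 V x (ih2 V x)
  | nec _ ih => intro V x; intro y _; exact ih V y
  | subst σ _ ih =>
      intro V x
      rw [toB_subst]
      exact (BSat_subst R V _ _ x).mpr (ih _ x)

lemma R1'_refl : Reflexive R1' := fun _ => Relation.ReflTransGen.refl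
lemma R1'_trans : Transitive R1' := fun _ _ _ h1 h2 => h1.trans h2
lemma R2'_refl : Reflexive R2' := fun _ => Relation.ReflTransGen.refl
lemma R2'_trans : Transitive R2' := fun _ _ _ h1 h2 => h1.trans h2

/-- Points of the form `(a, some b)` are `R₁′`-maximal. -/
lemma R1'_endpoint {a : T22} {b : T2W} {z : W222} (h : R1' (a, some b) z) :
    z = (a, some b) := by
  rcases Relation.ReflTransGen.cases_head h with h | ⟨c, hgen, _⟩
  · exact h.symm
  · rcases hgen with ⟨a', a'', _, hx, _⟩ | ⟨a', hx, _⟩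
    · exact absurd (congrArg Prod.snd hx) (by simp)
    · exact absurd (congrArg Prod.snd hx) (by simp)

/-- `R₂′`-successors of `(a, some b)` have the form `(a, some b')`. -/
lemma R2'_some {a : T22} {b : T2W} {z : W222} (h : R2' (a, some b) z) :
    ∃ b', z = (a, some b') := by
  induction h with
  | refl => exact ⟨b, rfl⟩
  | tail _ hgen ih =>
      obtain ⟨b', rfl⟩ := ih
      rcases hgen with ⟨a', a'', _, hx, _⟩ | ⟨a', b₁, b₂, _, hx, hy⟩
      · exact absurd (congrArg Prod.snd hx) (by simp)
      · obtain ⟨ha, hb⟩ := Prod.mk.injEq .. ▸ hx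
        exact ⟨b₂, by simp [hy, ha.symm]⟩

/-- Every point `R₁′`-reaches a point of the form `(a, some b)`. -/
lemma exists_endpoint (x : W222) : ∃ a b, R1' x (a, some b) := by
  obtain ⟨a, o⟩ := x
  cases o with
  | none =>
      exact ⟨a, [], Relation.ReflTransGen.single (Or.inr ⟨a, rfl, rfl⟩)⟩
  | some b => exact ⟨a, b, Relation.ReflTransGen.refl⟩

/-- At an endpoint, `◇₁A → □₁A` for any satisfaction condition. -/
lemma endpoint_dia_box {a : T22} {b : T2W} (V : ℕ → W222 → Prop) (A : BForm)
    (hd : ¬ ∀ y, R1' (a, some b) y → ¬ BSat ![R1', R2'] V y A) :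
    ∀ y, R1' (a, some b) y → BSat ![R1', R2'] V y A := by
  push_neg at hd
  obtain ⟨y, hy, hA⟩ := hd
  have := R1'_endpoint (by simpa using hy)
  subst this
  intro z hz
  have := R1'_endpoint (by simpa using hz)
  subst this
  exact hA

lemma valid_S4Ax (i : Fin 2) (hrefl : Reflexive (![R1', R2'] i))
    (htrans : Transitive (![R1', R2'] i)) :
    ∀ A ∈ S4Ax, BValid ![R1', R2'] (A.toB i) := by
  intro A hA
  rcases hA with h | h
  · subst h
    intro V x
    simp only [pM, MForm.toB, BSat]
    intro h
    exact h x (hrefl x)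
  · simp only [Set.mem_singleton_iff] at h
    subst h
    intro V x
    simp only [pM, MForm.toB, BSat]
    intro h y hxy z hyz
    exact h z (htrans hxy hyz)

lemma valid_McKM : BValid ![R1', R2'] (McKM.toB 0) := by
  intro V x
  simp only [McKM, pM, MForm.dia, MForm.neg, MForm.toB, BSat]
  intro h1 h2
  obtain ⟨a, b, hab⟩ := exists_endpoint x
  have hR : (![R1', R2'] : Fin 2 → W222 → W222 → Prop) 0 x (a, some b) := by
    simpa using hab
  -- h1 at the endpoint gives ◇₁p there, hence p there
  have hd := h1 _ hR
  -- hd : (∀ z, R z → (V 0 z → False)) → False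
  have hp : BSat ![R1', R2'] V (a, some b) (BForm.var 0) := by
    by_contra hnp
    apply hd
    intro z hz hVz
    have := R1'_endpoint (a := a) (b := b) (by simpa using hz)
    subst this
    exact hnp hVz
  apply h2 _ hR
  intro z hz
  have := R1'_endpoint (a := a) (b := b) (by simpa using hz)
  subst this
  exact hp

lemma valid_MKB : BValid ![R1', R2'] MKB := by
  intro V x
  simp only [MKB, pB, BForm.dia, BForm.neg, BSat]
  intro h
  obtain ⟨a, b, hab⟩ := exists_endpoint x
  apply h (a, some b) (by simpa using hab)
  intro z hz
  obtain ⟨b', rfl⟩ := R2'_some (a := a) (b := b) (by simpa using hz)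
  -- goal: ◇₁p → □₁p at the endpoint (a, some b')
  intro hd
  have hp : V 0 (a, some b') := by
    by_contra hnp
    apply hd
    intro w hw hVw
    have := R1'_endpoint (a := a) (b := b') (by simpa using hw)
    subst this
    exact hnp hVw
  intro w hw
  have := R1'_endpoint (a := a) (b := b') (by simpa using hw)
  subst this
  exact hp

end Aux

/-- the frame 𝕋₂,₂₊₂ validates L = S4.1 ∗ S4 + ◇₁□₂(◇₁p → □₁p):
both relations are reflexive and transitive, S4.1 is valid for □₁, S4 is valid
for □₂, and ◇₁□₂(◇₁p → □₁p) is valid. -/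

theorem T222_validates_LL :
    Reflexive R1' ∧ Transitive R1' ∧ Reflexive R2' ∧ Transitive R2' ∧
    (∀ A ∈ S41L, BValid ![R1', R2'] (A.toB 0)) ∧
    (∀ A ∈ S4L, BValid ![R1', R2'] (A.toB 1)) ∧
    BValid ![R1', R2'] MKB := by
  refine ⟨R1'_refl, R1'_trans, R2'_refl, R2'_trans, ?_, ?_, valid_MKB⟩
  · intro A hA
    refine MProv_sound _ 0 _ ?_ hA
    intro B hB
    rcases hB with hB | hB
    · exact valid_S4Ax 0 (by simpa using R1'_refl) (by simpa using R1'_trans) B hB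
    · simp only [Set.mem_singleton_iff] at hB
      subst hB
      exact valid_McKM
  · intro A hA
    exact MProv_sound _ 1 _
      (valid_S4Ax 1 (by simpa using R2'_refl) (by simpa using R2'_trans)) hA
end
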